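/- Let R be a ring and A a right ideal of R. Let A = A_1⋯A_n and A = B_1⋯B_m be two serial factorizations of A. Then n = m and there exists a unique permutation σ of {1, …, n} such that A_i = B_{σ(i)} for every i = 1, …, n. Moreover, when n ≥ 2, all the right ideals A_1, …, A_n and the right ideal A are two-sided, the map r + A ↦ (r + A_1, …, r + A_n) is a ring isomorphism from R/A onto the ring direct product R/A_1 × ⋯ × R/A_n, and every R/A_i is a right chain ring. -/

import Mathlib

/-!
Coindependence together with pairwise commutation turns the product `A₁⋯Aₙ` into the
intersection `⋂ Aᵢ` (a commuting comaximal pair satisfies `IJ = I ∩ J`), and for `n ≥ 2` it makes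
every `Aᵢ` two-sided: writing `r = a + b` with `a ∈ Aᵢ`, `b ∈ Aⱼ`, we get
`r x = a x + b x ∈ Aᵢ + AⱼAᵢ ⊆ Aᵢ` for `x ∈ Aᵢ`.

For uniqueness, let `⋂ Aᵢ ⊆ B` with `B` proper and `R/B` uniserial. The right ideals `B + Aᵢ`
form a chain and any two of them sum to `R`, so `B + Aₖ = R` for all `k` but at most one index
`i`. For those `k`, two-sidedness gives `⋂_{j ≠ k} Aⱼ ⊆ B`. Since the `⋂_{j ≠ k} Aⱼ` together
with `⋂ Aⱼ` generate `R`, an exceptional `i` must exist, and `B + ⋂_{j ≠ i} Aⱼ = R`, whence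
`Aᵢ ⊆ B` by two-sidedness again. Applied to both factorizations this matches their factors
bijectively.

The ring isomorphism is the Chinese remainder theorem, and `R/Aᵢ` is a right chain ring because
its right ideals pull back to right ideals of `R` containing `Aᵢ`, which form a chain.
-/

open MulOpposite

universe u

/-- The product `A·B` of two right ideals of `R` (right ideals are `Rᵐᵒᵖ`-submodules of `R`):
the set of all finite sums of products `a * b` with `a ∈ A`, `b ∈ B`. -/
def rmul {R : Type u} [Ring R] (A B : Submodule Rᵐᵒᵖ R) : Submodule Rᵐᵒᵖ R :=
  Submodule.span Rᵐᵒᵖ {x : R | ∃ a ∈ A, ∃ b ∈ B, x = a * b}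

/-- The product `A₁⋯Aₙ` of a (possibly empty) list of right ideals. -/
def rprod {R : Type u} [Ring R] : List (Submodule Rᵐᵒᵖ R) → Submodule Rᵐᵒᵖ R
  | [] => ⊤
  | [A] => A
  | A :: l => rmul A (rprod l)

/-- A finite family of right ideals is coindependent if `Aᵢ + ⋂_{j ≠ i} Aⱼ = R` for every `i`. -/
def Coindep {R : Type u} [Ring R] {n : ℕ} (A : Fin n → Submodule Rᵐᵒᵖ R) : Prop :=
  ∀ i, A i ⊔ (⨅ j, ⨅ (_ : j ≠ i), A j) = ⊤

/-- A module is uniserial if its submodules are linearly ordered by inclusion. -/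
def IsUniserialMod (S : Type*) [Ring S] (M : Type*) [AddCommGroup M] [Module S M] : Prop :=
  ∀ N P : Submodule S M, N ≤ P ∨ P ≤ N

/-- A right ideal is a two-sided ideal if it is also closed under left multiplication. -/
def IsTwoSidedRid {R : Type u} [Ring R] (A : Submodule Rᵐᵒᵖ R) : Prop :=
  ∀ (r : R), ∀ x ∈ A, r * x ∈ A

/-- A serial factorization of a right ideal `A`: a factorization `A = A₁⋯Aₙ` into proper
right ideals that pairwise commute, form a coindependent family, and are such that every
quotient `R/Aᵢ` is a uniserial right `R`-module. -/
def IsSerialFact {R : Type u} [Ring R] {n : ℕ} (A : Submodule Rᵐᵒᵖ R)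
    (F : Fin n → Submodule Rᵐᵒᵖ R) : Prop :=
  (∀ i, F i ≠ ⊤) ∧ (∀ i j, rmul (F i) (F j) = rmul (F j) (F i)) ∧ Coindep F ∧
    (∀ i, IsUniserialMod Rᵐᵒᵖ (R ⧸ F i)) ∧ A = rprod (List.ofFn F)

/-- A right ideal has a serial factorization if it admits one of some length. -/
def HasSerialFact {R : Type u} [Ring R] (A : Submodule Rᵐᵒᵖ R) : Prop :=
  ∃ (n : ℕ) (F : Fin n → Submodule Rᵐᵒᵖ R), IsSerialFact A F

/-- A right chain ring: its right ideals are linearly ordered by inclusion. -/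
def IsRightChainRing (R : Type u) [Ring R] : Prop :=
  ∀ A B : Submodule Rᵐᵒᵖ R, A ≤ B ∨ B ≤ A

/-- A ring is right duo if every right ideal is a two-sided ideal. -/
def IsRightDuo (R : Type u) [Ring R] : Prop :=
  ∀ A : Submodule Rᵐᵒᵖ R, IsTwoSidedRid A

/-- The principal right ideal `rR`. -/
def rspan {R : Type u} [Ring R] (r : R) : Submodule Rᵐᵒᵖ R :=
  Submodule.span Rᵐᵒᵖ ({r} : Set R)

open scoped Pointwise

variable {R : Type u} [Ring R]

theorem mul_mem_of_mem_right_ideal {A : Submodule Rᵐᵒᵖ R} {x : R} (r : R) (hx : x ∈ A) :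
    x * r ∈ A :=
  A.smul_mem (op r) hx

theorem eq_top_of_one_mem_right_ideal {A : Submodule Rᵐᵒᵖ R} (h : (1 : R) ∈ A) : A = ⊤ :=
  eq_top_iff.2 fun x _ => by simpa using mul_mem_of_mem_right_ideal x h

theorem mul_mem_rmul {A B : Submodule Rᵐᵒᵖ R} {a b : R} (ha : a ∈ A) (hb : b ∈ B) :
    a * b ∈ rmul A B :=
  Submodule.subset_span ⟨a, ha, b, hb, rfl⟩

theorem rmul_le {A B C : Submodule Rᵐᵒᵖ R} (h : ∀ a ∈ A, ∀ b ∈ B, a * b ∈ C) :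
    rmul A B ≤ C :=
  Submodule.span_le.2 fun _ ⟨a, ha, b, hb, hx⟩ => hx ▸ h a ha b hb

theorem rmul_le_left (A B : Submodule Rᵐᵒᵖ R) : rmul A B ≤ A :=
  rmul_le fun _ ha b _ => mul_mem_of_mem_right_ideal b ha

theorem rmul_top (A : Submodule Rᵐᵒᵖ R) : rmul A ⊤ = A :=
  le_antisymm (rmul_le_left A ⊤) fun a ha => by
    simpa using mul_mem_rmul ha (Submodule.mem_top (x := (1 : R)))

theorem toAddSubmonoid_rmul (A B : Submodule Rᵐᵒᵖ R) :
    (rmul A B).toAddSubmonoid = A.toAddSubmonoid * B.toAddSubmonoid := by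
  refine le_antisymm (fun x hx => ?_)
    (AddSubmonoid.mul_le.2 fun a ha b hb => mul_mem_rmul ha hb)
  have hB : B.toAddSubmonoid * ⊤ ≤ B.toAddSubmonoid :=
    AddSubmonoid.mul_le.2 fun b hb r _ => mul_mem_of_mem_right_ideal r hb
  induction hx using Submodule.span_induction with
  | mem x hx =>
    obtain ⟨a, ha, b, hb, rfl⟩ := hx
    exact AddSubmonoid.mul_mem_mul ha hb
  | zero => exact zero_mem _
  | add x y _ _ hx hy => exact add_mem hx hy
  | smul r x _ hx =>
    have : x * r.unop ∈ A.toAddSubmonoid * B.toAddSubmonoid * ⊤ :=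
      AddSubmonoid.mul_mem_mul hx (AddSubmonoid.mem_top _)
    rw [mul_assoc] at this
    exact AddSubmonoid.mul_le_mul_right hB this

theorem rmul_assoc (A B C : Submodule Rᵐᵒᵖ R) :
    rmul (rmul A B) C = rmul A (rmul B C) :=
  Submodule.toAddSubmonoid_injective <| by simp only [toAddSubmonoid_rmul, mul_assoc]

theorem rprod_cons (A : Submodule Rᵐᵒᵖ R) (l : List (Submodule Rᵐᵒᵖ R)) :
    rprod (A :: l) = rmul A (rprod l) := by
  cases l with
  | nil => exact (rmul_top A).symm
  | cons B l => rfl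

theorem rmul_rprod_comm (C : Submodule Rᵐᵒᵖ R) {l : List (Submodule Rᵐᵒᵖ R)} (hl : l ≠ [])
    (h : ∀ X ∈ l, rmul C X = rmul X C) : rmul C (rprod l) = rmul (rprod l) C := by
  induction l with
  | nil => exact absurd rfl hl
  | cons X l ih =>
    rcases eq_or_ne l [] with rfl | hl'
    · exact h X (by simp)
    rw [rprod_cons, ← rmul_assoc, h X (by simp), rmul_assoc,
      ih hl' fun Y hY => h Y (by simp [hY]), ← rmul_assoc]

theorem rmul_eq_inf {A B : Submodule Rᵐᵒᵖ R} (htop : A ⊔ B = ⊤)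
    (hc : rmul A B = rmul B A) : rmul A B = A ⊓ B := by
  refine le_antisymm (le_inf (rmul_le_left A B) (hc ▸ rmul_le_left B A)) fun x hx => ?_
  obtain ⟨a, ha, b, hb, hab⟩ := Submodule.mem_sup.1 (htop ▸ Submodule.mem_top (x := (1 : R)))
  rw [← one_mul x, ← hab, add_mul]
  exact add_mem (mul_mem_rmul ha hx.2) (hc ▸ mul_mem_rmul hb hx.1)

section iInfCompl

variable {ι α : Type*} [CompleteLattice α]

-- `Coindep F` unfolds to `∀ i, F i ⊔ iInfCompl F i = ⊤`, and is used in that form below.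
def iInfCompl (f : ι → α) (i : ι) : α := ⨅ j, ⨅ (_ : j ≠ i), f j

theorem inf_iInfCompl (f : ι → α) (i : ι) : f i ⊓ iInfCompl f i = ⨅ j, f j :=
  (iInf_split_single f i).symm

theorem iInfCompl_le {f : ι → α} {i j : ι} (h : j ≠ i) : iInfCompl f i ≤ f j :=
  (iInf_le _ j).trans (iInf_le _ h)

theorem iInfCompl_fin_zero {k : ℕ} (f : Fin (k + 1) → α) :
    iInfCompl f 0 = ⨅ i : Fin k, f i.succ :=
  le_antisymm (le_iInf fun i => iInfCompl_le (Fin.succ_ne_zero i)) <|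
    le_iInf₂ fun j hj => by
      obtain ⟨i, rfl⟩ := Fin.exists_succ_eq.2 hj
      exact iInf_le _ i

end iInfCompl

section Coindep

variable {n : ℕ} {F : Fin n → Submodule Rᵐᵒᵖ R}

theorem Coindep.sup_eq_top (hF : Coindep F) {i j : Fin n} (hij : j ≠ i) : F i ⊔ F j = ⊤ :=
  top_le_iff.1 <| (hF i).symm.le.trans (sup_le_sup_left (iInfCompl_le hij) _)

theorem Coindep.eq_of_le (hF : Coindep F) {i j : Fin n} (hi : F i ≠ ⊤) (h : F j ≤ F i) :
    j = i := by
  by_contra hij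
  exact hi (by rw [← hF.sup_eq_top hij, sup_eq_left.2 h])

theorem Coindep.tail {k : ℕ} {F : Fin (k + 1) → Submodule Rᵐᵒᵖ R} (hF : Coindep F) :
    Coindep fun i : Fin k => F i.succ := fun i =>
  top_le_iff.1 <| (hF i.succ).symm.le.trans <| sup_le_sup_left
    (le_iInf₂ fun _ hj => iInfCompl_le fun h => hj (Fin.succ_injective _ h)) _

theorem rprod_ofFn_eq_iInf (hF : Coindep F)
    (hcomm : ∀ i j, rmul (F i) (F j) = rmul (F j) (F i)) :
    rprod (List.ofFn F) = ⨅ i, F i := by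
  induction n with
  | zero => exact (iInf_of_empty F).symm
  | succ k ih =>
    have htail := ih hF.tail fun i j => hcomm i.succ j.succ
    rw [List.ofFn_succ, rprod_cons, htail, ← inf_iInfCompl F 0, iInfCompl_fin_zero]
    rcases k with _ | k
    · rw [iInf_of_empty, rmul_top, inf_top_eq]
    rw [← htail, rmul_eq_inf (by rw [htail, ← iInfCompl_fin_zero]; exact hF 0)]
    refine rmul_rprod_comm _ (by simp) fun X hX => ?_
    obtain ⟨i, rfl⟩ := List.mem_ofFn.1 hX
    exact hcomm 0 i.succ

theorem Coindep.exists_sum_mul_sub_mem (hF : Coindep F) :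
    ∃ e : Fin n → R, (∀ i, e i ∈ iInfCompl F i) ∧
      ∀ (r : Fin n → R) (i : Fin n), ∑ k, e k * r k - r i ∈ F i := by
  choose f hf e he hfe using fun i =>
    Submodule.mem_sup.1 ((hF i).symm ▸ Submodule.mem_top (x := (1 : R)))
  refine ⟨e, he, fun r i => ?_⟩
  have hsplit : ∑ k, e k * r k - r i = ∑ k ∈ Finset.univ.erase i, e k * r k - f i * r i :=
    calc ∑ k, e k * r k - r i
        = e i * r i + ∑ k ∈ Finset.univ.erase i, e k * r k - (f i * r i + e i * r i) := by
          rw [Finset.add_sum_erase _ (fun k => e k * r k) (Finset.mem_univ i), ← add_mul, hfe i,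
            one_mul]
      _ = ∑ k ∈ Finset.univ.erase i, e k * r k - f i * r i := by abel
  rw [hsplit]
  refine sub_mem (Submodule.sum_mem _ fun k hk => ?_) (mul_mem_of_mem_right_ideal _ (hf i))
  exact mul_mem_of_mem_right_ideal _ (iInfCompl_le (f := F) (Finset.ne_of_mem_erase hk).symm (he k))

theorem Coindep.iSup_iInfCompl_sup_iInf (hF : Coindep F) :
    (⨆ i, iInfCompl F i) ⊔ ⨅ i, F i = ⊤ := by
  obtain ⟨e, he, hsum⟩ := hF.exists_sum_mul_sub_mem
  have h1 : ∑ k, e k - 1 ∈ ⨅ i, F i :=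
    Submodule.mem_iInf _ |>.2 fun i => by simpa using hsum 1 i
  refine eq_top_of_one_mem_right_ideal ?_
  rw [show (1 : R) = ∑ k, e k - (∑ k, e k - 1) by abel]
  exact sub_mem (Submodule.mem_sup_left <| Submodule.sum_mem _ fun k _ =>
    le_iSup (fun i => iInfCompl F i) k (he k)) (Submodule.mem_sup_right h1)

end Coindep

theorem isTwoSidedRid_of_sup_eq_top {A B : Submodule Rᵐᵒᵖ R} (htop : A ⊔ B = ⊤)
    (hc : rmul A B = rmul B A) : IsTwoSidedRid A := by
  intro r x hx
  obtain ⟨a, ha, b, hb, hab⟩ := Submodule.mem_sup.1 (htop ▸ Submodule.mem_top (x := r))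
  rw [← hab, add_mul]
  exact add_mem (mul_mem_of_mem_right_ideal x ha) (rmul_le_left A B (hc ▸ mul_mem_rmul hb hx))

theorem isTwoSidedRid_iInf {ι : Sort*} {F : ι → Submodule Rᵐᵒᵖ R}
    (h : ∀ i, IsTwoSidedRid (F i)) : IsTwoSidedRid (⨅ i, F i) := fun r x hx =>
  (Submodule.mem_iInf _).2 fun i => h i r x ((Submodule.mem_iInf _).1 hx i)

theorem isTwoSidedRid_iInfCompl {ι : Type*} {F : ι → Submodule Rᵐᵒᵖ R}
    (h : ∀ i, IsTwoSidedRid (F i)) (i : ι) : IsTwoSidedRid (iInfCompl F i) :=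
  isTwoSidedRid_iInf fun j => isTwoSidedRid_iInf fun _ => h j

theorem Coindep.isTwoSidedRid {n : ℕ} {F : Fin n → Submodule Rᵐᵒᵖ R} (hF : Coindep F)
    (hcomm : ∀ i j, rmul (F i) (F j) = rmul (F j) (F i)) (hn : 2 ≤ n) (i : Fin n) :
    IsTwoSidedRid (F i) := by
  have := Fin.nontrivial_iff_two_le.2 hn
  obtain ⟨j, hj⟩ := exists_ne i
  exact isTwoSidedRid_of_sup_eq_top (hF.sup_eq_top hj) (hcomm i j)

def IsTwoSidedRid.toTwoSidedIdeal {A : Submodule Rᵐᵒᵖ R} (hA : IsTwoSidedRid A) :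
    TwoSidedIdeal R :=
  TwoSidedIdeal.mk' A A.zero_mem A.add_mem A.neg_mem (hA _ _)
    (mul_mem_of_mem_right_ideal _)

theorem IsTwoSidedRid.ringCon_iff {A : Submodule Rᵐᵒᵖ R} (hA : IsTwoSidedRid A) (r s : R) :
    hA.toTwoSidedIdeal.ringCon r s ↔ r - s ∈ A := by
  rw [TwoSidedIdeal.rel_iff, IsTwoSidedRid.toTwoSidedIdeal, TwoSidedIdeal.mem_mk']
  rfl

theorem le_of_sup_eq_top_of_inf_le {B I J : Submodule Rᵐᵒᵖ R} (hJ : IsTwoSidedRid J)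
    (hBI : B ⊔ I = ⊤) (hIJ : I ⊓ J ≤ B) : J ≤ B := by
  intro x hx
  obtain ⟨b, hb, y, hy, hby⟩ := Submodule.mem_sup.1 (hBI ▸ Submodule.mem_top (x := (1 : R)))
  rw [← one_mul x, ← hby, add_mul]
  exact add_mem (mul_mem_of_mem_right_ideal x hb)
    (hIJ ⟨mul_mem_of_mem_right_ideal x hy, hJ y x hx⟩)

theorem le_total_of_isUniserialMod_quotient {S M : Type*} [Ring S] [AddCommGroup M] [Module S M]
    {K C D : Submodule S M} (hu : IsUniserialMod S (M ⧸ K)) (hC : K ≤ C) (hD : K ≤ D) :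
    C ≤ D ∨ D ≤ C := by
  have reflect : ∀ {C D : Submodule S M}, K ≤ C → K ≤ D →
      C.map K.mkQ ≤ D.map K.mkQ → C ≤ D := fun hC hD h => by
    simpa [Submodule.comap_map_mkQ, sup_eq_right.2 hC, sup_eq_right.2 hD] using
      Submodule.comap_mono (f := K.mkQ) h
  exact (hu _ _).imp (reflect hC hD) (reflect hD hC)

theorem Coindep.exists_le_of_iInf_le {n : ℕ} {F : Fin n → Submodule Rᵐᵒᵖ R} (hF : Coindep F)
    (hts : ∀ i, IsTwoSidedRid (F i)) {B : Submodule Rᵐᵒᵖ R} (hB : B ≠ ⊤)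
    (hchain : ∀ C D, B ≤ C → B ≤ D → C ≤ D ∨ D ≤ C) (hle : ⨅ i, F i ≤ B) :
    ∃ i, F i ≤ B := by
  have hcompl : ∀ k, B ⊔ F k = ⊤ → iInfCompl F k ≤ B := fun k hk =>
    le_of_sup_eq_top_of_inf_le (isTwoSidedRid_iInfCompl hts k) hk
      ((inf_iInfCompl F k).trans_le hle)
  by_cases hall : ∀ k, B ⊔ F k = ⊤
  · refine absurd (top_le_iff.1 ?_) hB
    rw [← hF.iSup_iInfCompl_sup_iInf]
    exact sup_le (iSup_le fun k => hcompl k (hall k)) hle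
  obtain ⟨i, hi⟩ := not_forall.1 hall
  have hother : ∀ k, k ≠ i → B ⊔ F k = ⊤ := fun k hk => by
    have htop : (B ⊔ F k) ⊔ (B ⊔ F i) = ⊤ := top_le_iff.1 <| (hF.sup_eq_top hk).symm.le.trans
      (sup_le (le_sup_right.trans le_sup_right) (le_sup_right.trans le_sup_left))
    rcases hchain _ _ le_sup_left le_sup_left with h | h
    · exact absurd (by rwa [sup_eq_right.2 h] at htop) hi
    · rwa [sup_eq_left.2 h] at htop
  refine ⟨i, le_of_sup_eq_top_of_inf_le (hts i) (I := iInfCompl F i) ?_ ?_⟩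
  · rw [eq_top_iff, ← hF.iSup_iInfCompl_sup_iInf]
    refine sup_le (iSup_le fun k => ?_) (hle.trans le_sup_left)
    rcases eq_or_ne k i with rfl | hk
    · exact le_sup_right
    · exact (hcompl k (hother k hk)).trans le_sup_left
  · rw [inf_comm, inf_iInfCompl]
    exact hle

section IsSerialFact

variable {A : Submodule Rᵐᵒᵖ R} {n m : ℕ} {F : Fin n → Submodule Rᵐᵒᵖ R}
  {G : Fin m → Submodule Rᵐᵒᵖ R}

theorem IsSerialFact.ne_top (hF : IsSerialFact A F) (i : Fin n) : F i ≠ ⊤ := hF.1 i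

theorem IsSerialFact.rmul_comm (hF : IsSerialFact A F) (i j : Fin n) :
    rmul (F i) (F j) = rmul (F j) (F i) :=
  hF.2.1 i j

theorem IsSerialFact.coindep (hF : IsSerialFact A F) : Coindep F := hF.2.2.1

theorem IsSerialFact.isUniserialMod (hF : IsSerialFact A F) (i : Fin n) :
    IsUniserialMod Rᵐᵒᵖ (R ⧸ F i) :=
  hF.2.2.2.1 i

theorem IsSerialFact.eq_iInf (hF : IsSerialFact A F) : A = ⨅ i, F i :=
  hF.2.2.2.2.trans (rprod_ofFn_eq_iInf hF.coindep hF.rmul_comm)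

theorem IsSerialFact.injective (hF : IsSerialFact A F) : Function.Injective F :=
  fun _ j h => hF.coindep.eq_of_le (hF.ne_top j) h.le

theorem IsSerialFact.exists_le (hF : IsSerialFact A F) {B : Submodule Rᵐᵒᵖ R} (hB : B ≠ ⊤)
    (hu : IsUniserialMod Rᵐᵒᵖ (R ⧸ B)) (hAB : A ≤ B) : ∃ i, F i ≤ B := by
  rw [hF.eq_iInf] at hAB
  rcases n with _ | _ | n
  · exact absurd (top_le_iff.1 ((iInf_of_empty F).symm.le.trans hAB)) hB
  · exact ⟨0, by simpa using hAB⟩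
  · exact hF.coindep.exists_le_of_iInf_le (hF.coindep.isTwoSidedRid hF.rmul_comm (by omega)) hB
      (fun _ _ => le_total_of_isUniserialMod_quotient hu) hAB

theorem IsSerialFact.exists_eq (hF : IsSerialFact A F) (hG : IsSerialFact A G) (i : Fin n) :
    ∃ j, F i = G j := by
  obtain ⟨j, hj⟩ := hG.exists_le (hF.ne_top i) (hF.isUniserialMod i) (hF.eq_iInf ▸ iInf_le F i)
  obtain ⟨i', hi'⟩ := hF.exists_le (hG.ne_top j) (hG.isUniserialMod j) (hG.eq_iInf ▸ iInf_le G j)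
  obtain rfl := hF.coindep.eq_of_le (hF.ne_top i) (hi'.trans hj)
  exact ⟨j, le_antisymm hi' hj⟩

end IsSerialFact

def RingHom.toOpSemilinearMap {S : Type*} [Ring S] (f : R →+* S) : R →ₛₗ[RingHom.op f] S where
  toFun := f
  map_add' := map_add f
  map_smul' r x := map_mul f x r.unop

theorem isRightChainRing_of_surjective {S : Type u} [Ring S] (f : R →+* S)
    (hf : Function.Surjective f) {K : Submodule Rᵐᵒᵖ R} (hK : ∀ x ∈ K, f x = 0)
    (hchain : ∀ C D, K ≤ C → K ≤ D → C ≤ D ∨ D ≤ C) : IsRightChainRing S := by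
  have reflect : ∀ {J J' : Submodule Sᵐᵒᵖ S},
      J.comap f.toOpSemilinearMap ≤ J'.comap f.toOpSemilinearMap → J ≤ J' := fun h y hy => by
    obtain ⟨x, rfl⟩ := hf y
    exact h hy
  have above : ∀ J : Submodule Sᵐᵒᵖ S, K ≤ J.comap f.toOpSemilinearMap := fun J x hx =>
    show f x ∈ J from (hK x hx).symm ▸ J.zero_mem
  exact fun J J' => (hchain _ _ (above J) (above J')).imp reflect reflect

theorem IsTwoSidedRid.isRightChainRing_quotient {A : Submodule Rᵐᵒᵖ R} (hA : IsTwoSidedRid A)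
    (hu : IsUniserialMod Rᵐᵒᵖ (R ⧸ A)) : IsRightChainRing hA.toTwoSidedIdeal.ringCon.Quotient :=
  isRightChainRing_of_surjective _ (RingCon.mk'_surjective _)
    (fun x hx => (RingCon.eq _).2 (by simpa [hA.ringCon_iff] using hx))
    (fun _ _ => le_total_of_isUniserialMod_quotient hu)

theorem Coindep.exists_ringEquiv_pi {n : ℕ} {F : Fin n → Submodule Rᵐᵒᵖ R} (hF : Coindep F)
    (hts : ∀ i, IsTwoSidedRid (F i)) :
    ∃ c : RingCon R, (∀ r s, c r s ↔ r - s ∈ ⨅ i, F i) ∧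
      ∃ e : c.Quotient ≃+* ((i : Fin n) → (hts i).toTwoSidedIdeal.ringCon.Quotient),
        ∀ r : R, e r = fun i => (r : (hts i).toTwoSidedIdeal.ringCon.Quotient) := by
  let φ := RingHom.pi fun i => (hts i).toTwoSidedIdeal.ringCon.mk'
  have hφ : Function.Surjective φ := fun y => by
    obtain ⟨e, -, he⟩ := hF.exists_sum_mul_sub_mem
    choose r hr using fun i => (hts i).toTwoSidedIdeal.ringCon.mk'_surjective (y i)
    refine ⟨∑ k, e k * r k, funext fun i => ?_⟩
    rw [← hr i]
    exact (RingCon.eq _).2 (((hts i).ringCon_iff _ _).2 (he r i))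
  refine ⟨RingCon.ker φ, fun r s => ?_, RingCon.quotientKerEquivOfSurjective φ hφ, fun _ => rfl⟩
  rw [RingCon.ker_apply, funext_iff, Submodule.mem_iInf]
  exact forall_congr' fun i => (RingCon.eq _).trans ((hts i).ringCon_iff r s)

theorem statement5_general {R : Type u} [Ring R] {n m : ℕ}
    (A : Submodule Rᵐᵒᵖ R)
    (F : Fin n → Submodule Rᵐᵒᵖ R) (G : Fin m → Submodule Rᵐᵒᵖ R)
    (hF : IsSerialFact A F) (hG : IsSerialFact A G) :
    n = m ∧ (∃! σ : Fin n ≃ Fin m, ∀ i, F i = G (σ i)) ∧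
      (2 ≤ n →
        (∀ i, IsTwoSidedRid (F i)) ∧ IsTwoSidedRid A ∧
          ∃ (c : RingCon R) (d : Fin n → RingCon R),
            (∀ r s : R, c r s ↔ r - s ∈ A) ∧
            (∀ i (r s : R), d i r s ↔ r - s ∈ F i) ∧
            (∀ i, IsRightChainRing (d i).Quotient) ∧
            ∃ e : c.Quotient ≃+* ((i : Fin n) → (d i).Quotient),
              ∀ r : R, e (r : c.Quotient) = fun i => (r : (d i).Quotient)) := by
  choose f hf using hF.exists_eq hG
  have hf_surj : Function.Surjective f := fun j => by
    obtain ⟨i, hi⟩ := hG.exists_eq hF j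
    exact ⟨i, hG.injective ((hf i).symm.trans hi.symm)⟩
  let σ := Equiv.ofBijective f ⟨fun i j h => hF.injective (by rw [hf, hf, h]), hf_surj⟩
  refine ⟨Fin.equiv_iff_eq.1 ⟨σ⟩, ⟨σ, hf, fun τ hτ => Equiv.ext fun i =>
    hG.injective ((hτ i).symm.trans (hf i))⟩, fun hn => ?_⟩
  have hts := hF.coindep.isTwoSidedRid hF.rmul_comm hn
  obtain ⟨c, hc, e, he⟩ := hF.coindep.exists_ringEquiv_pi hts
  rw [hF.eq_iInf]
  exact ⟨hts, isTwoSidedRid_iInf hts, c, fun i => (hts i).toTwoSidedIdeal.ringCon, hc,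
    fun i => (hts i).ringCon_iff, fun i => (hts i).isRightChainRing_quotient (hF.isUniserialMod i),
    e, he⟩

/-- Theorem: uniqueness of serial factorizations, and when `n ≥ 2` all factors and `A` are
two-sided, the canonical map `r + A ↦ (r + A₁, …, r + Aₙ)` is a ring isomorphism
`R/A → R/A₁ × ⋯ × R/Aₙ`, and every `R/Aᵢ` is a right chain ring. -/
theorem statement5 {R : Type u} [Ring R] [Nontrivial R] {n m : ℕ}
    (A : Submodule Rᵐᵒᵖ R)
    (F : Fin n → Submodule Rᵐᵒᵖ R) (G : Fin m → Submodule Rᵐᵒᵖ R)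
    (hF : IsSerialFact A F) (hG : IsSerialFact A G) :
    n = m ∧ (∃! σ : Fin n ≃ Fin m, ∀ i, F i = G (σ i)) ∧
      (2 ≤ n →
        (∀ i, IsTwoSidedRid (F i)) ∧ IsTwoSidedRid A ∧
          ∃ (c : RingCon R) (d : Fin n → RingCon R),
            (∀ r s : R, c r s ↔ r - s ∈ A) ∧
            (∀ i (r s : R), d i r s ↔ r - s ∈ F i) ∧
            (∀ i, IsRightChainRing (d i).Quotient) ∧
            ∃ e : c.Quotient ≃+* ((i : Fin n) → (d i).Quotient),
              ∀ r : R, e (r : c.Quotient) = fun i => (r : (d i).Quotient)) :=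
  statement5_general A F G hF hG
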